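/- Let A be the matrix algebra M_n(k) equipped with a good G-grading, i.e., a grading for which every matrix unit e_{ij} is homogeneous. Then A is graded symmetric, with the trace form tr(xy) providing the required non-degenerate associative symmetric bilinear form vanishing on A_σ × A_τ when στ ≠ e. -/

import Mathlib

/-- The degree-`g` component of the dual of a graded module:
`(M*)_g = { f | f(M_h) = 0 for all h ≠ g⁻¹ }`. -/
def dualComponent {k M : Type*} [Field k] [AddCommGroup M] [Module k M]
    {G : Type*} [Group G] (ℳ : G → Submodule k M) (g : G) :
    Submodule k (Module.Dual k M) where
  carrier := {f | ∀ h : G, h ≠ g⁻¹ → ∀ x ∈ ℳ h, f x = 0}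
  zero_mem' := by intro h hh x hx; rfl
  add_mem' := by
    intro f₁ f₂ h₁ h₂ h hh x hx
    simp [h₁ h hh x hx, h₂ h hh x hx]
  smul_mem' := by
    intro c f hf h hh x hx
    simp [hf h hh x hx]

/-- `A` is graded symmetric: `A ≅ A*` as graded `(A,A)`-bimodules, where the left
action on `A*` is `(a • f) y = f (y * a)`, the right action is `(f • a) y = f (a * y)`,
and `(A*)_g = { f | f(A_h) = 0 for h ≠ g⁻¹ }`. -/
def IsGradedSymmetric {k A : Type*} [Field k] [Ring A] [Algebra k A]
    {G : Type*} [Group G] (𝒜 : G → Submodule k A) : Prop :=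
  ∃ φ : A ≃ₗ[k] Module.Dual k A,
    (∀ a x y : A, φ (a * x) y = φ x (y * a)) ∧
    (∀ a x y : A, φ (x * a) y = φ x (a * y)) ∧
    ∀ g : G, ∀ x ∈ 𝒜 g, φ x ∈ dualComponent 𝒜 g

/-!
Each diagonal unit `e_ii` is a nonzero homogeneous idempotent, so it has degree `e`. For `w` of
degree `σ ≠ e` the matrix `e_ii w e_ii = w_ii e_ii` then has degrees both `σ` and `e`, hence
vanishes; so every homogeneous matrix of degree `≠ e` has zero diagonal and zero trace. Since
`x y` has degree `στ`, the trace form `tr(xy)` kills `A_σ × A_τ` for `στ ≠ e`, and being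
nondegenerate it identifies `A` with `A*` as graded bimodules.
-/

theorem iSupIndep.eq_zero_of_mem_of_mem {R M ι : Type*} [Semiring R] [AddCommMonoid M]
    [Module R M] {𝒜 : ι → Submodule R M} (hind : iSupIndep 𝒜) {i j : ι} (hij : i ≠ j) {x : M}
    (hxi : x ∈ 𝒜 i) (hxj : x ∈ 𝒜 j) : x = 0 :=
  Submodule.disjoint_def.mp (hind.pairwiseDisjoint hij) x hxi hxj

theorem degree_eq_one_of_isIdempotentElem {R A G : Type*} [Semiring R] [Semiring A] [Module R A]
    [Group G] {𝒜 : G → Submodule R A} (hind : iSupIndep 𝒜)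
    (hmul : ∀ {g h : G}, ∀ a ∈ 𝒜 g, ∀ b ∈ 𝒜 h, a * b ∈ 𝒜 (g * h))
    {e : A} (he : IsIdempotentElem e) (he0 : e ≠ 0) {g : G} (heg : e ∈ 𝒜 g) : g = 1 := by
  by_contra hg
  have heg2 : e ∈ 𝒜 (g * g) := he ▸ hmul e heg e heg
  exact he0 (hind.eq_zero_of_mem_of_mem (fun h => hg (left_eq_mul.mp h)) heg heg2)

namespace Matrix

section Grading

variable {n k G : Type*} [Fintype n] [DecidableEq n] [Semiring k] [Group G]
  {𝒜 : G → Submodule k (Matrix n n k)}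

theorem single_mem_one_of_mem [Nontrivial k] (hind : iSupIndep 𝒜)
    (hmul : ∀ {g h : G}, ∀ a ∈ 𝒜 g, ∀ b ∈ 𝒜 h, a * b ∈ 𝒜 (g * h))
    {i : n} {g : G} (hi : single i i (1 : k) ∈ 𝒜 g) : single i i (1 : k) ∈ 𝒜 1 := by
  have hidem : IsIdempotentElem (single i i (1 : k)) := by
    simp [IsIdempotentElem]
  have hne : single i i (1 : k) ≠ 0 := fun h =>
    one_ne_zero (α := k) (by simpa using congrFun₂ h i i)
  rwa [← degree_eq_one_of_isIdempotentElem hind hmul hidem hne hi]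

theorem apply_self_eq_zero_of_mem (hind : iSupIndep 𝒜)
    (hmul : ∀ {g h : G}, ∀ a ∈ 𝒜 g, ∀ b ∈ 𝒜 h, a * b ∈ 𝒜 (g * h))
    {i : n} (hi : single i i (1 : k) ∈ 𝒜 1) {σ : G} (hσ : σ ≠ 1) {w : Matrix n n k}
    (hw : w ∈ 𝒜 σ) : w i i = 0 := by
  have hcorner : single i i (1 : k) * w * single i i 1 = w i i • single i i 1 := by
    simp [smul_single]
  have hσ' : single i i (1 : k) * w * single i i 1 ∈ 𝒜 σ := by
    simpa using hmul _ (hmul _ hi _ hw) _ hi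
  have h1 : single i i (1 : k) * w * single i i 1 ∈ 𝒜 1 :=
    hcorner ▸ Submodule.smul_mem _ _ hi
  have h0 := hind.eq_zero_of_mem_of_mem hσ hσ' h1
  simpa using congrFun₂ h0 i i

theorem trace_eq_zero_of_mem [Nontrivial k] (hind : iSupIndep 𝒜)
    (hmul : ∀ {g h : G}, ∀ a ∈ 𝒜 g, ∀ b ∈ 𝒜 h, a * b ∈ 𝒜 (g * h))
    (hdiag : ∀ i : n, ∃ g : G, single i i (1 : k) ∈ 𝒜 g) {σ : G} (hσ : σ ≠ 1)
    {w : Matrix n n k} (hw : w ∈ 𝒜 σ) : w.trace = 0 :=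
  Finset.sum_eq_zero fun i _ =>
    have ⟨_, hi⟩ := hdiag i
    apply_self_eq_zero_of_mem hind hmul (single_mem_one_of_mem hind hmul hi) hσ hw

end Grading

section TraceForm

variable {n k : Type*} [Fintype n]

theorem eq_zero_of_forall_trace_mul_eq_zero [NonAssocSemiring k] {x : Matrix n n k}
    (h : ∀ y, (x * y).trace = 0) : x = 0 :=
  ext_iff_trace_mul_right.mpr (by simpa using h)

theorem eq_zero_of_forall_trace_mul_eq_zero' [NonAssocSemiring k] {y : Matrix n n k}
    (h : ∀ x, (x * y).trace = 0) : y = 0 :=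
  ext_iff_trace_mul_left.mpr (by simpa using h)

variable (n k) [DecidableEq n] [Field k]

noncomputable def traceForm : LinearMap.BilinForm k (Matrix n n k) :=
  (LinearMap.mul k (Matrix n n k)).compr₂ (traceLinearMap n k k)

variable {n k}

@[simp]
theorem traceForm_apply (x y : Matrix n n k) : traceForm n k x y = (x * y).trace := rfl

theorem traceForm_nondegenerate : (traceForm n k).Nondegenerate :=
  ⟨fun _ h => eq_zero_of_forall_trace_mul_eq_zero h,
    fun _ h => eq_zero_of_forall_trace_mul_eq_zero' h⟩

theorem isGradedSymmetric_of_trace_eq_zero {G : Type*} [Group G]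
    {𝒜 : G → Submodule k (Matrix n n k)}
    (hmul : ∀ {g h : G}, ∀ a ∈ 𝒜 g, ∀ b ∈ 𝒜 h, a * b ∈ 𝒜 (g * h))
    (htrace : ∀ σ : G, σ ≠ 1 → ∀ w ∈ 𝒜 σ, w.trace = 0) : IsGradedSymmetric 𝒜 := by
  refine ⟨(traceForm n k).toDual traceForm_nondegenerate, ?_, ?_, ?_⟩
  · intro a x y
    simp only [LinearMap.BilinForm.toDual_def, traceForm_apply]
    rw [Matrix.mul_assoc, trace_mul_comm, Matrix.mul_assoc]
  · intro a x y
    simp only [LinearMap.BilinForm.toDual_def, traceForm_apply, Matrix.mul_assoc]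
  · intro g x hx h hh y hy
    exact htrace _ (fun hgh => hh (eq_inv_of_mul_eq_one_right hgh)) _ (hmul _ hx _ hy)

end TraceForm

end Matrix

theorem matrix_goodGrading_gradedSymmetric_general
    {k : Type*} [Field k] {n : ℕ}
    {G : Type*} [Group G] [DecidableEq G]
    (𝒜 : G → Submodule k (Matrix (Fin n) (Fin n) k))
    (hinternal : DirectSum.IsInternal 𝒜)
    (hmul : ∀ {g h : G}, ∀ a ∈ 𝒜 g, ∀ b ∈ 𝒜 h, a * b ∈ 𝒜 (g * h))
    (hgood : ∀ i j : Fin n, ∃ g : G, Matrix.single i j (1 : k) ∈ 𝒜 g) :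
    IsGradedSymmetric 𝒜 ∧
    (∀ x : Matrix (Fin n) (Fin n) k,
      (∀ y : Matrix (Fin n) (Fin n) k, (x * y).trace = 0) → x = 0) ∧
    (∀ y : Matrix (Fin n) (Fin n) k,
      (∀ x : Matrix (Fin n) (Fin n) k, (x * y).trace = 0) → y = 0) ∧
    (∀ x y z : Matrix (Fin n) (Fin n) k, ((x * y) * z).trace = (x * (y * z)).trace) ∧
    (∀ x y : Matrix (Fin n) (Fin n) k, (x * y).trace = (y * x).trace) ∧
    (∀ σ τ : G, σ * τ ≠ 1 →
      ∀ x ∈ 𝒜 σ, ∀ y ∈ 𝒜 τ, (x * y).trace = 0) := by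
  have htrace : ∀ σ : G, σ ≠ 1 → ∀ w ∈ 𝒜 σ, w.trace = 0 := fun _ hσ _ hw =>
    Matrix.trace_eq_zero_of_mem hinternal.submodule_iSupIndep hmul (fun i => hgood i i) hσ hw
  exact ⟨Matrix.isGradedSymmetric_of_trace_eq_zero hmul htrace,
    fun _ => Matrix.eq_zero_of_forall_trace_mul_eq_zero,
    fun _ => Matrix.eq_zero_of_forall_trace_mul_eq_zero',
    fun x y z => by rw [Matrix.mul_assoc],
    Matrix.trace_mul_comm,
    fun _ _ hστ _ hx _ hy => htrace _ hστ _ (hmul _ hx _ hy)⟩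

/-- if `A = M_n(k)` carries a `G`-grading for which every matrix unit
`e_{ij}` is homogeneous (a "good grading"), then `A` is graded symmetric, the trace
form `(x, y) ↦ tr(xy)` being a non-degenerate associative symmetric bilinear form
vanishing on `A_σ × A_τ` whenever `στ ≠ e`. -/
theorem matrix_goodGrading_gradedSymmetric
    {k : Type*} [Field k] {n : ℕ}
    {G : Type*} [Group G] [DecidableEq G]
    (𝒜 : G → Submodule k (Matrix (Fin n) (Fin n) k))
    (hinternal : DirectSum.IsInternal 𝒜)
    (hone : (1 : Matrix (Fin n) (Fin n) k) ∈ 𝒜 1)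
    (hmul : ∀ {g h : G}, ∀ a ∈ 𝒜 g, ∀ b ∈ 𝒜 h, a * b ∈ 𝒜 (g * h))
    (hgood : ∀ i j : Fin n, ∃ g : G, Matrix.single i j (1 : k) ∈ 𝒜 g) :
    IsGradedSymmetric 𝒜 ∧
    (∀ x : Matrix (Fin n) (Fin n) k,
      (∀ y : Matrix (Fin n) (Fin n) k, (x * y).trace = 0) → x = 0) ∧
    (∀ y : Matrix (Fin n) (Fin n) k,
      (∀ x : Matrix (Fin n) (Fin n) k, (x * y).trace = 0) → y = 0) ∧
    (∀ x y z : Matrix (Fin n) (Fin n) k, ((x * y) * z).trace = (x * (y * z)).trace) ∧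
    (∀ x y : Matrix (Fin n) (Fin n) k, (x * y).trace = (y * x).trace) ∧
    (∀ σ τ : G, σ * τ ≠ 1 →
      ∀ x ∈ 𝒜 σ, ∀ y ∈ 𝒜 τ, (x * y).trace = 0) :=
  matrix_goodGrading_gradedSymmetric_general 𝒜 hinternal hmul hgood
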